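/- arXiv:1106.2778 — 2 statements merged into one kernel-verified Lean document; each statement's English description precedes it below -/
import Mathlib

section
/- Let T > 0, a ≥ 0, and let f, r : [0,T] → [0,∞) be integrable. Define F(t,z) = f(t)·z·(1 + |log z| + a) + r(t) for z > 0 and F(t,0) = r(t). Suppose x : [0,T] → [0,∞) is absolutely continuous with x(0) = 0 and x'(t) ≤ F(t, x(t)) for a.e. t, and suppose y : [0,T] → (0,∞) is absolutely continuous with y(0) = y₀ > 0 and y'(t) = F(t, y(t)) for a.e. t. Then x(t) ≤ y(t) for every t ∈ [0,T]. Moreover, y is nondecreasing on [0,T]. -/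
/-!
Since `y` solves the equation with nonnegative right-hand side, it is nondecreasing, hence
`y ≥ y₀ > 0`. Wherever `x > y`, both values therefore lie in `[y₀, M]`, with `M` a bound
for `x`, and there `z ↦ z (1 + |log z| + a)` is Lipschitz; so the singularity of `z |log z|`
at `0` never comes into play. If `x(t₀) > y(t₀)`, let `s` be the last time before `t₀` with
`x ≤ y`; then `w = x - y` satisfies `w(t) ≤ ∫ₛᵗ L f w` on `[s, t₀]`, and a short-time
Gronwall argument forces `w ≤ 0` somewhere in `(s, t₀]`, a contradiction.
-/

open MeasureTheory intervalIntegral Set Real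

theorem sub_eq_integral_of_eq_add_integral {z z' : ℝ → ℝ} {a b u v : ℝ}
    (hz' : IntegrableOn z' (Icc a b)) (hz : ∀ t ∈ Icc a b, z t = z a + ∫ s in a..t, z' s)
    (hu : u ∈ Icc a b) (hv : v ∈ Icc a b) :
    z v - z u = ∫ s in u..v, z' s := by
  have ha : a ∈ Icc a b := ⟨le_rfl, hu.1.trans hu.2⟩
  have hint : ∀ t ∈ Icc a b, IntervalIntegrable z' volume a t := fun t ht =>
    (hz'.mono_set (uIcc_subset_Icc ha ht)).intervalIntegrable
  rw [hz u hu, hz v hv, ← integral_interval_sub_left (hint v hv) (hint u hu)]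
  ring

theorem continuousOn_of_eq_add_integral {z z' : ℝ → ℝ} {a b : ℝ}
    (hz' : IntegrableOn z' (Icc a b)) (hz : ∀ t ∈ Icc a b, z t = z a + ∫ s in a..t, z' s) :
    ContinuousOn z (Icc a b) := by
  rcases le_or_gt a b with hab | hba
  · rw [← uIcc_of_le hab] at hz' ⊢
    refine ((continuousOn_const (c := z a)).add (continuousOn_primitive_interval hz')).congr ?_
    rwa [uIcc_of_le hab]
  · simp [Icc_eq_empty_of_lt hba]

theorem monotoneOn_of_eq_add_integral {z z' : ℝ → ℝ} {a b : ℝ}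
    (hz' : IntegrableOn z' (Icc a b)) (hz : ∀ t ∈ Icc a b, z t = z a + ∫ s in a..t, z' s)
    (hnn : ∀ᵐ t ∂volume.restrict (Icc a b), 0 ≤ z' t) :
    MonotoneOn z (Icc a b) := by
  intro u hu v hv huv
  rw [← sub_nonneg, sub_eq_integral_of_eq_add_integral hz' hz hu hv]
  exact integral_nonneg_of_ae_restrict huv
    (ae_restrict_of_ae_restrict_of_subset (Icc_subset_Icc hu.1 hv.2) hnn)

theorem mul_one_add_abs_log_add_sub_le {a p q : ℝ} (hp : 0 < p) (hpq : p ≤ q) :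
    q * (1 + |log q| + a) - p * (1 + |log p| + a) ≤ (2 + a + |log q|) * (q - p) := by
  have hq : 0 < q := hp.trans_le hpq
  have hlog : log q - log p ≤ (q - p) / p := by
    have h := log_le_sub_one_of_pos (div_pos hq hp)
    rwa [log_div hq.ne' hp.ne', div_sub_one hp.ne'] at h
  have habs : |log q| - |log p| ≤ log q - log p :=
    (abs_sub_abs_le_abs_sub _ _).trans_eq (abs_of_nonneg (sub_nonneg.2 (log_le_log hp hpq)))
  have key : p * (|log q| - |log p|) ≤ q - p := calc
    p * (|log q| - |log p|) ≤ p * ((q - p) / p) := by gcongr; exact habs.trans hlog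
    _ = q - p := mul_div_cancel₀ _ hp.ne'
  nlinarith [abs_nonneg (log q)]

theorem abs_log_le_max_of_mem_Icc {m M q : ℝ} (hm : 0 < m) (hq : q ∈ Icc m M) :
    |log q| ≤ max |log m| |log M| := by
  have h₁ := log_le_log hm hq.1
  have h₂ := log_le_log (hm.trans_le hq.1) hq.2
  rw [abs_le]
  constructor
  · linarith [neg_abs_le (log m), le_max_left |log m| |log M|]
  · linarith [le_abs_self (log M), le_max_right |log m| |log M|]

theorem ContinuousOn.exists_last_nonpos {w : ℝ → ℝ} {a b : ℝ}
    (hw : ContinuousOn w (Icc a b)) (hab : a ≤ b) (ha : w a ≤ 0) :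
    ∃ s ∈ Icc a b, w s ≤ 0 ∧ ∀ t ∈ Ioc s b, 0 < w t := by
  set S := Icc a b ∩ w ⁻¹' Iic 0
  have hS : IsCompact S :=
    isCompact_Icc.of_isClosed_subset (hw.preimage_isClosed_of_isClosed isClosed_Icc isClosed_Iic)
      inter_subset_left
  have hsS : sSup S ∈ S := hS.sSup_mem ⟨a, ⟨le_rfl, hab⟩, ha⟩
  refine ⟨sSup S, hsS.1, hsS.2, fun t ht => ?_⟩
  by_contra! hwt
  exact ht.1.not_ge (le_csSup hS.bddAbove ⟨⟨hsS.1.1.trans ht.1.le, ht.2⟩, hwt⟩)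

theorem exists_integral_le_of_integrableOn {k : ℝ → ℝ} {s b ε : ℝ} (hsb : s < b)
    (hk : IntegrableOn k (Icc s b)) (hε : 0 < ε) :
    ∃ c ∈ Ioc s b, ∫ u in s..c, k u ≤ ε := by
  rw [← uIcc_of_le hsb.le] at hk
  have hlim := (continuousOn_primitive_interval hk s left_mem_uIcc).tendsto
  rw [uIcc_of_le hsb.le, integral_same] at hlim
  have := left_nhdsWithin_Ioc_neBot hsb
  have hsmall :=
    (hlim.mono_left (nhdsWithin_mono _ Ioc_subset_Icc_self)).eventually (Iic_mem_nhds hε)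
  obtain ⟨c, hc, hcs⟩ := (hsmall.and self_mem_nhdsWithin).exists
  exact ⟨c, hcs, hc⟩

/-- At a maximum point `τ` of `w` on a short interval `[s, c]` with `∫ₛᶜ k ≤ 1/2`, the
integral inequality gives `w τ ≤ w τ / 2`. -/
theorem exists_nonpos_of_le_integral_mul {w k : ℝ → ℝ} {s b : ℝ} (hsb : s < b)
    (hk : IntegrableOn k (Icc s b)) (hk0 : ∀ u ∈ Icc s b, 0 ≤ k u)
    (hw : ContinuousOn w (Icc s b)) (hle : ∀ t ∈ Icc s b, w t ≤ ∫ u in s..t, k u * w u) :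
    ∃ c ∈ Ioc s b, w c ≤ 0 := by
  obtain ⟨c, hc, hkc⟩ := exists_integral_le_of_integrableOn hsb hk one_half_pos
  have hcb : Icc s c ⊆ Icc s b := Icc_subset_Icc_right hc.2
  obtain ⟨τ, hτ, hmax⟩ := isCompact_Icc.exists_isMaxOn (nonempty_Icc.2 hc.1.le) (hw.mono hcb)
  have hτb : Icc s τ ⊆ Icc s b := (Icc_subset_Icc_right hτ.2).trans hcb
  have hkτ : ∫ u in s..τ, k u ≤ 1 / 2 :=
    (integral_mono_interval le_rfl hτ.1 hτ.2
      ((ae_restrict_iff' measurableSet_Ioc).2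
        (.of_forall fun u hu => hk0 u (hcb (Ioc_subset_Icc_self hu))))
      ((intervalIntegrable_iff_integrableOn_Icc_of_le hc.1.le).2 (hk.mono_set hcb))).trans hkc
  have hkτ0 : 0 ≤ ∫ u in s..τ, k u := integral_nonneg hτ.1 fun u hu => hk0 u (hτb hu)
  have hwτ : w τ ≤ (∫ u in s..τ, k u) * w τ := calc
    w τ ≤ ∫ u in s..τ, k u * w u := hle τ (hcb hτ)
    _ ≤ ∫ u in s..τ, k u * w τ := by
      refine integral_mono_on hτ.1 ((intervalIntegrable_iff_integrableOn_Icc_of_le hτ.1).2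
        ((hk.mono_set hτb).mul_continuousOn (hw.mono hτb) isCompact_Icc)) ?_ fun u hu => ?_
      · exact (intervalIntegrable_iff_integrableOn_Icc_of_le hτ.1).2
          ((hk.mono_set hτb).mul_const _)
      · exact mul_le_mul_of_nonneg_left (hmax ⟨hu.1, hu.2.trans hτ.2⟩) (hk0 u (hτb hu))
    _ = (∫ u in s..τ, k u) * w τ := integral_mul_const _ _
  refine ⟨c, hc, (hmax (right_mem_Icc.2 hc.1.le)).trans ?_⟩
  nlinarith

theorem le_of_sub_deriv_le_mul_sub {x x' y y' k : ℝ → ℝ} {a b : ℝ}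
    (hx' : IntegrableOn x' (Icc a b)) (hx : ∀ t ∈ Icc a b, x t = x a + ∫ s in a..t, x' s)
    (hy' : IntegrableOn y' (Icc a b)) (hy : ∀ t ∈ Icc a b, y t = y a + ∫ s in a..t, y' s)
    (hk : IntegrableOn k (Icc a b)) (hk0 : ∀ u ∈ Icc a b, 0 ≤ k u) (ha : x a ≤ y a)
    (hxy : ∀ᵐ u ∂volume.restrict (Icc a b), y u < x u → x' u - y' u ≤ k u * (x u - y u)) :
    ∀ t ∈ Icc a b, x t ≤ y t := by
  intro t₀ ht₀
  by_contra! hlt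
  set w := fun t => x t - y t
  have hw : ContinuousOn w (Icc a b) :=
    (continuousOn_of_eq_add_integral hx' hx).sub (continuousOn_of_eq_add_integral hy' hy)
  obtain ⟨s, hs, hws, hpos⟩ :=
    (hw.mono (Icc_subset_Icc_right ht₀.2)).exists_last_nonpos ht₀.1 (sub_nonpos.2 ha)
  have hst₀ : s < t₀ := hs.2.lt_of_ne (by rintro rfl; exact hws.not_gt (sub_pos.2 hlt))
  have hsub : Icc s t₀ ⊆ Icc a b := Icc_subset_Icc hs.1 ht₀.2
  have hle : ∀ t ∈ Icc s t₀, w t ≤ ∫ u in s..t, k u * w u := by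
    intro t ht
    have hst : Icc s t ⊆ Icc a b := (Icc_subset_Icc_right ht.2).trans hsub
    have hs' : s ∈ Icc a b := hst (left_mem_Icc.2 ht.1)
    have ht' : t ∈ Icc a b := hst (right_mem_Icc.2 ht.1)
    have hint : ∀ g : ℝ → ℝ, IntegrableOn g (Icc a b) → IntervalIntegrable g volume s t :=
      fun g hg => (hg.mono_set (uIcc_of_le ht.1 ▸ hst)).intervalIntegrable
    calc w t ≤ w t - w s := by linarith
      _ = ∫ u in s..t, (x' u - y' u) := by
        rw [integral_sub (hint x' hx') (hint y' hy'),
          ← sub_eq_integral_of_eq_add_integral hx' hx hs' ht',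
          ← sub_eq_integral_of_eq_add_integral hy' hy hs' ht']
        ring
      _ ≤ ∫ u in s..t, k u * w u := by
        refine integral_mono_ae_restrict ht.1 ((hint x' hx').sub (hint y' hy'))
          ((intervalIntegrable_iff_integrableOn_Icc_of_le ht.1).2
            ((hk.mono_set hst).mul_continuousOn (hw.mono hst) isCompact_Icc)) ?_
        rw [← Measure.restrict_congr_set Ioc_ae_eq_Icc]
        filter_upwards [ae_restrict_of_ae_restrict_of_subset (Ioc_subset_Icc_self.trans hst) hxy,
          ae_restrict_mem measurableSet_Ioc] with u hu hus
        exact hu (sub_pos.1 (hpos u ⟨hus.1, hus.2.trans ht.2⟩))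
  obtain ⟨c, hc, hwc⟩ := exists_nonpos_of_le_integral_mul hst₀ (hk.mono_set hsub)
    (fun u hu => hk0 u (hsub hu)) (hw.mono hsub) hle
  exact hwc.not_gt (hpos c hc)

theorem osgood_comparison_general (T a : ℝ) (ha : 0 ≤ a)
    (f r : ℝ → ℝ)
    (hfint : IntegrableOn f (Set.Icc 0 T))
    (hf0 : ∀ t ∈ Set.Icc (0 : ℝ) T, 0 ≤ f t)
    (hr0 : ∀ t ∈ Set.Icc (0 : ℝ) T, 0 ≤ r t)
    (F : ℝ → ℝ → ℝ)
    (hF : ∀ t z : ℝ, F t z =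
      if 0 < z then f t * z * (1 + |Real.log z| + a) + r t else r t)
    (x x' y y' : ℝ → ℝ) (y₀ : ℝ) (hy₀pos : 0 < y₀)
    (hx0 : x 0 = 0)
    (hx'int : IntegrableOn x' (Set.Icc 0 T))
    (hxac : ∀ t ∈ Set.Icc (0 : ℝ) T, x t = x 0 + ∫ s in (0 : ℝ)..t, x' s)
    (hxineq : ∀ᵐ t ∂(volume.restrict (Set.Icc (0 : ℝ) T)), x' t ≤ F t (x t))
    (hy0 : y 0 = y₀)
    (hypos : ∀ t ∈ Set.Icc (0 : ℝ) T, 0 < y t)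
    (hy'int : IntegrableOn y' (Set.Icc 0 T))
    (hyac : ∀ t ∈ Set.Icc (0 : ℝ) T, y t = y 0 + ∫ s in (0 : ℝ)..t, y' s)
    (hyeq : ∀ᵐ t ∂(volume.restrict (Set.Icc (0 : ℝ) T)), y' t = F t (y t)) :
    (∀ t ∈ Set.Icc (0 : ℝ) T, x t ≤ y t) ∧ MonotoneOn y (Set.Icc (0 : ℝ) T) := by
  have hy_mono : MonotoneOn y (Icc 0 T) := by
    refine monotoneOn_of_eq_add_integral hy'int hyac ?_
    filter_upwards [hyeq, ae_restrict_mem measurableSet_Icc] with t hyt ht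
    rw [hyt, hF, if_pos (hypos t ht)]
    have := hf0 t ht
    have := hypos t ht
    have := hr0 t ht
    positivity
  refine ⟨?_, hy_mono⟩
  obtain ⟨M, hM⟩ := isCompact_Icc.bddAbove_image (continuousOn_of_eq_add_integral hx'int hxac)
  set L := 2 + a + max |log y₀| |log M|
  refine le_of_sub_deriv_le_mul_sub hx'int hxac hy'int hyac (hfint.const_mul L)
    (fun u hu => mul_nonneg (by positivity) (hf0 u hu)) (by rw [hx0, hy0]; exact hy₀pos.le) ?_
  filter_upwards [hxineq, hyeq, ae_restrict_mem measurableSet_Icc] with u hxu hyu hu hlt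
  have hy₀u : y₀ ≤ y u := hy0 ▸ hy_mono ⟨le_rfl, hu.1.trans hu.2⟩ hu hu.1
  have hlog : |log (x u)| ≤ max |log y₀| |log M| :=
    abs_log_le_max_of_mem_Icc hy₀pos ⟨hy₀u.trans hlt.le, hM (mem_image_of_mem x hu)⟩
  rw [hF, if_pos ((hypos u hu).trans hlt)] at hxu
  rw [hF, if_pos (hypos u hu)] at hyu
  have hfu := hf0 u hu
  have hxy := sub_pos.2 hlt
  calc x' u - y' u ≤ f u * (x u * (1 + |log (x u)| + a) - y u * (1 + |log (y u)| + a)) := by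
        rw [hyu]; linarith
    _ ≤ f u * ((2 + a + |log (x u)|) * (x u - y u)) := by
        gcongr; exact mul_one_add_abs_log_add_sub_le (hypos u hu) hlt.le
    _ ≤ f u * (L * (x u - y u)) := by gcongr; exact add_le_add_right hlog _
    _ = L * f u * (x u - y u) := by ring

/-- **Osgood-type comparison principle.**  Let
`F(t,z) = f(t) z (1 + |log z| + a) + r(t)` for `z > 0` and `F(t,0) = r(t)`
(extended by `r(t)` for `z ≤ 0`).  If `x` is absolutely continuous and
nonnegative with `x(0) = 0` and `x' ≤ F(t, x)` a.e., while `y` is absolutely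
continuous and positive with `y(0) = y₀ > 0` and `y' = F(t, y)` a.e.
(absolute continuity encoded via integrable a.e. derivatives and the
fundamental theorem of calculus), then `x ≤ y` on `[0,T]`, and `y` is
nondecreasing on `[0,T]`. -/
theorem osgood_comparison (T a : ℝ) (hT : 0 < T) (ha : 0 ≤ a)
    (f r : ℝ → ℝ)
    (hfint : IntegrableOn f (Set.Icc 0 T)) (hrint : IntegrableOn r (Set.Icc 0 T))
    (hf0 : ∀ t ∈ Set.Icc (0 : ℝ) T, 0 ≤ f t)
    (hr0 : ∀ t ∈ Set.Icc (0 : ℝ) T, 0 ≤ r t)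
    (F : ℝ → ℝ → ℝ)
    (hF : ∀ t z : ℝ, F t z =
      if 0 < z then f t * z * (1 + |Real.log z| + a) + r t else r t)
    (x x' y y' : ℝ → ℝ) (y₀ : ℝ) (hy₀pos : 0 < y₀)
    (hx0 : x 0 = 0)
    (hxnn : ∀ t ∈ Set.Icc (0 : ℝ) T, 0 ≤ x t)
    (hx'int : IntegrableOn x' (Set.Icc 0 T))
    (hxac : ∀ t ∈ Set.Icc (0 : ℝ) T, x t = x 0 + ∫ s in (0 : ℝ)..t, x' s)
    (hxineq : ∀ᵐ t ∂(volume.restrict (Set.Icc (0 : ℝ) T)), x' t ≤ F t (x t))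
    (hy0 : y 0 = y₀)
    (hypos : ∀ t ∈ Set.Icc (0 : ℝ) T, 0 < y t)
    (hy'int : IntegrableOn y' (Set.Icc 0 T))
    (hyac : ∀ t ∈ Set.Icc (0 : ℝ) T, y t = y 0 + ∫ s in (0 : ℝ)..t, y' s)
    (hyeq : ∀ᵐ t ∂(volume.restrict (Set.Icc (0 : ℝ) T)), y' t = F t (y t)) :
    (∀ t ∈ Set.Icc (0 : ℝ) T, x t ≤ y t) ∧ MonotoneOn y (Set.Icc (0 : ℝ) T) :=
  osgood_comparison_general T a ha f r hfint hf0 hr0 F hF x x' y y' y₀ hy₀pos hx0 hx'int hxac hxineq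
    hy0 hypos hy'int hyac hyeq
end

section
/- For every dimension n ≥ 1 and every p ∈ (1,∞) there exists a constant C = C(n,p) such that for every f ∈ L¹_loc(ℝⁿ) with ‖f‖_BMO < ∞ and every cube Q ⊂ ℝⁿ, ( (1/|Q|) ∫_Q |f(x) − f_Q|^p dx )^{1/p} ≤ C ‖f‖_BMO. In particular, every BMO function belongs to L^p locally (i.e. is p-integrable on every set of finite measure contained in a cube) for all 1 < p < ∞. -/
/-!
Calderón–Zygmund stopping time. Fix a cube `Q` and `B > ‖f‖_BMO`. The maximal dyadic subcubes
`D` of `Q` on which the average of `|f - f_Q|` exceeds `2B` have total measure at most `|Q|/2`,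
each satisfies `|f_D - f_Q| ≤ 2^(n+1) B` because its parent is not selected, and outside them
`|f - f_Q| ≤ 2B` almost everywhere by Lebesgue differentiation. Repeating the construction inside
each `D` gives `|{x ∈ Q : |f x - f_Q| > 2^(n+1) B k}| ≤ 2^(-k) |Q|`, and summing over `k` bounds
the `p`-th moment. Since `B` is arbitrary, the bound holds with `B = ‖f‖_BMO`.

The argument is run on `Fin n → ℝ`, whose sup-metric balls are the cubes, and transported to
`EuclideanSpace` by the volume-preserving map `ofLp`.
-/

open MeasureTheory Function
open scoped ENNReal

noncomputable section

abbrev Ev (n : ℕ) := EuclideanSpace ℝ (Fin n)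

/-- The axis-parallel cube with center `c` and side length `h`. -/
def cube {n : ℕ} (c : Ev n) (h : ℝ) : Set (Ev n) := {x | ∀ i, |x i - c i| ≤ h / 2}

/-- The average of `f` over the cube with center `c` and side length `h`
(whose Lebesgue measure is `h ^ n`). -/
def cubeAvg {n : ℕ} (f : Ev n → ℝ) (c : Ev n) (h : ℝ) : ℝ :=
  (h ^ n)⁻¹ • ∫ x in cube c h, f x

/-- The BMO seminorm of `f`: the supremum over all cubes `Q` of the mean
oscillation of `f` over `Q`.  (This equals `‖M^# f‖_{L^∞}`, where `M^#` is the
sharp maximal function.) -/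
def bmoENorm {n : ℕ} (f : Ev n → ℝ) : ℝ≥0∞ :=
  ⨆ (c : Ev n) (h : ℝ) (_ : 0 < h),
    ENNReal.ofReal ((h ^ n)⁻¹ * ∫ x in cube c h, |f x - cubeAvg f c h|)

open Set Filter Metric
open scoped Topology

variable {n : ℕ}

def cell (l : Fin n → ℝ) (s : ℝ) : Set (Fin n → ℝ) := pi univ fun i => Ico (l i) (l i + s)

def cellAvg (f : (Fin n → ℝ) → ℝ) (l : Fin n → ℝ) (s : ℝ) : ℝ :=
  (s ^ n)⁻¹ * ∫ x in cell l s, f x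

section Cell

variable {f : (Fin n → ℝ) → ℝ} {l l' : Fin n → ℝ} {s : ℝ}

lemma measurableSet_cell : MeasurableSet (cell l s) :=
  MeasurableSet.univ_pi fun _ => measurableSet_Ico

lemma volume_cell (hs : 0 ≤ s) : volume (cell l s) = ENNReal.ofReal (s ^ n) := by
  simp [cell, Real.volume_pi_Ico, ENNReal.ofReal_pow hs]

lemma cell_ae_eq_pi_Icc : cell l s =ᵐ[volume] pi univ fun i => Icc (l i) (l i + s) :=
  Measure.pi_Ico_ae_eq_pi_Icc

lemma closedBall_eq_pi_Icc (hs : 0 ≤ s) :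
    closedBall (fun i => l i + s / 2) (s / 2) = pi univ fun i => Icc (l i) (l i + s) := by
  rw [closedBall_pi _ (by positivity)]
  congr! 2 with i
  rw [Real.closedBall_eq_Icc]
  congr 1 <;> ring

lemma MeasureTheory.LocallyIntegrable.integrableOn_cell (hf : LocallyIntegrable f volume) :
    IntegrableOn f (cell l s) volume :=
  (hf.integrableOn_isCompact (isCompact_univ_pi fun _ => isCompact_Icc)).mono_set
    (pi_mono fun _ _ => Ico_subset_Icc_self)

lemma setAverage_closedBall_eq_cellAvg (hs : 0 < s) :
    ⨍ x in closedBall (fun i => l i + s / 2) (s / 2), f x = cellAvg f l s := by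
  have hball : cell l s =ᵐ[volume] closedBall (fun i => l i + s / 2) (s / 2) :=
    closedBall_eq_pi_Icc hs.le ▸ cell_ae_eq_pi_Icc
  rw [setAverage_eq, measureReal_def, ← measure_congr hball, volume_cell hs.le,
    ENNReal.toReal_ofReal (by positivity), setIntegral_congr_set hball.symm, smul_eq_mul, cellAvg]

/-- For the sup metric the closed cells are closed balls, on which the volume is doubling. -/
theorem ae_tendsto_cellAvg (hf : LocallyIntegrable f volume) :
    ∀ᵐ x, ∀ (L : ℕ → Fin n → ℝ) (σ : ℕ → ℝ), (∀ m, 0 < σ m) → Tendsto σ atTop (𝓝 0) →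
      (∀ m, x ∈ cell (L m) (σ m)) → Tendsto (fun m => cellAvg f (L m) (σ m)) atTop (𝓝 (f x)) := by
  filter_upwards [IsUnifLocDoublingMeasure.ae_tendsto_average volume hf 1] with x hx L σ hσ hσ0 hxL
  have hδ : Tendsto (fun m => σ m / 2) atTop (𝓝[>] 0) :=
    tendsto_nhdsWithin_iff.2 ⟨by simpa using hσ0.div_const 2, .of_forall fun m => half_pos (hσ m)⟩
  have hmem : ∀ᶠ m in atTop, x ∈ closedBall (fun i => L m i + σ m / 2) (1 * (σ m / 2)) := by
    refine .of_forall fun m => ?_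
    rw [one_mul, closedBall_eq_pi_Icc (hσ m).le]
    exact pi_mono (fun _ _ => Ico_subset_Icc_self) (hxL m)
  simpa only [setAverage_closedBall_eq_cellAvg (hσ _)] using hx _ _ hδ hmem

lemma abs_cellAvg_sub_le (hs : 0 < s) (hf : IntegrableOn f (cell l s) volume) (a : ℝ) :
    |cellAvg f l s - a| ≤ cellAvg (fun x => |f x - a|) l s := by
  have hvol : volume (cell l s) ≠ ⊤ := by simp [volume_cell hs.le]
  have hsub : cellAvg f l s - a = cellAvg (fun x => f x - a) l s := by
    rw [cellAvg, cellAvg, integral_sub hf (integrableOn_const hvol), setIntegral_const,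
      measureReal_def, volume_cell hs.le, ENNReal.toReal_ofReal (by positivity), smul_eq_mul]
    field_simp
  rw [hsub, cellAvg, cellAvg, abs_mul, abs_of_nonneg (by positivity)]
  gcongr
  exact abs_integral_le_integral_abs

lemma cellAvg_le_two_pow_mul {t : ℝ} (ht : 0 ≤ t) (hsub : cell l' (t / 2) ⊆ cell l t) (hf0 : 0 ≤ f)
    (hf : IntegrableOn f (cell l t) volume) :
    cellAvg f l' (t / 2) ≤ 2 ^ n * cellAvg f l t := by
  have hI : ∫ x in cell l' (t / 2), f x ≤ ∫ x in cell l t, f x :=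
    setIntegral_mono_set hf (.of_forall hf0) hsub.eventuallyLE
  calc cellAvg f l' (t / 2) ≤ ((t / 2) ^ n)⁻¹ * ∫ x in cell l t, f x := by
        rw [cellAvg]; gcongr
    _ = 2 ^ n * cellAvg f l t := by rw [cellAvg, div_pow, inv_div]; ring

end Cell

section Dyadic

variable {l : Fin n → ℝ} {s : ℝ} {m : ℕ} {k : Fin n → ℕ} {x : Fin n → ℝ}

def dyadicCorner (l : Fin n → ℝ) (s : ℝ) (m : ℕ) (k : Fin n → ℕ) : Fin n → ℝ :=
  fun i => l i + k i * (s / 2 ^ m)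

def subcell (l : Fin n → ℝ) (s : ℝ) (m : ℕ) (k : Fin n → ℕ) : Set (Fin n → ℝ) :=
  cell (dyadicCorner l s m k) (s / 2 ^ m)

def subcellAvg (f : (Fin n → ℝ) → ℝ) (l : Fin n → ℝ) (s : ℝ) (m : ℕ) (k : Fin n → ℕ) : ℝ :=
  cellAvg f (dyadicCorner l s m k) (s / 2 ^ m)

def dyadicIndex (l : Fin n → ℝ) (s : ℝ) (m : ℕ) (x : Fin n → ℝ) : Fin n → ℕ :=
  fun i => ⌊(x i - l i) / (s / 2 ^ m)⌋₊

lemma mem_subcell_iff (hs : 0 < s) :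
    x ∈ subcell l s m k ↔ (∀ i, l i ≤ x i) ∧ dyadicIndex l s m x = k := by
  have hδ : 0 < s / 2 ^ m := by positivity
  simp only [subcell, cell, dyadicCorner, dyadicIndex, mem_univ_pi, mem_Ico, funext_iff,
    ← forall_and]
  refine forall_congr' fun i => ?_
  constructor
  · rintro ⟨h₁, h₂⟩
    have hx : l i ≤ x i := le_trans (le_add_of_nonneg_right (by positivity)) h₁
    refine ⟨hx, (Nat.floor_eq_iff (div_nonneg (sub_nonneg.2 hx) hδ.le)).2 ⟨?_, ?_⟩⟩
    · rw [le_div_iff₀ hδ]; linarith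
    · rw [div_lt_iff₀ hδ]; linarith
  · rintro ⟨hx, hk⟩
    rw [Nat.floor_eq_iff (div_nonneg (sub_nonneg.2 hx) hδ.le), le_div_iff₀ hδ,
      div_lt_iff₀ hδ] at hk
    constructor <;> linarith [hk.1, hk.2]

lemma dyadicIndex_div_two_pow (hs : 0 < s) (m d : ℕ) (x : Fin n → ℝ) :
    (fun i => dyadicIndex l s (m + d) x i / 2 ^ d) = dyadicIndex l s m x := by
  funext i
  rw [dyadicIndex, dyadicIndex, ← Nat.floor_div_natCast]
  congr 1
  push_cast
  field_simp
  ring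

lemma subcell_subset_subcell (hs : 0 < s) (m d : ℕ) (k : Fin n → ℕ) :
    subcell l s (m + d) k ⊆ subcell l s m (fun i => k i / 2 ^ d) := by
  intro x hx
  rw [mem_subcell_iff hs] at hx ⊢
  exact ⟨hx.1, by rw [← hx.2, dyadicIndex_div_two_pow hs]⟩

lemma mem_subcell_dyadicIndex (hs : 0 < s) (hx : x ∈ cell l s) :
    x ∈ subcell l s m (dyadicIndex l s m x) :=
  (mem_subcell_iff hs).2 ⟨fun i => (hx i trivial).1, rfl⟩

lemma dyadicIndex_lt (hs : 0 < s) (hx : x ∈ cell l s) (i : Fin n) :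
    dyadicIndex l s m x i < 2 ^ m := by
  obtain ⟨h₁, h₂⟩ := hx i trivial
  have hδ : 0 < s / 2 ^ m := by positivity
  rw [dyadicIndex, Nat.floor_lt (div_nonneg (sub_nonneg.2 h₁) hδ.le), div_lt_iff₀ hδ]
  push_cast
  rw [mul_div_cancel₀ _ (by positivity)]
  linarith

lemma subcell_subset_cell (hs : 0 < s) (hk : ∀ i, k i < 2 ^ m) : subcell l s m k ⊆ cell l s := by
  intro x hx i _
  obtain ⟨h₁, h₂⟩ := hx i trivial
  have hδ : 0 < s / 2 ^ m := by positivity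
  have hki : ((k i : ℝ) + 1) * (s / 2 ^ m) ≤ s := by
    calc ((k i : ℝ) + 1) * (s / 2 ^ m) ≤ 2 ^ m * (s / 2 ^ m) := by
          gcongr; exact_mod_cast hk i
      _ = s := mul_div_cancel₀ _ (by positivity)
  simp only [dyadicCorner] at h₁ h₂
  constructor <;> nlinarith

lemma subcellAvg_zero (f : (Fin n → ℝ) → ℝ) (hk : ∀ i, k i < 2 ^ 0) :
    subcellAvg f l s 0 k = cellAvg f l s := by
  have hl : dyadicCorner l s 0 k = l :=
    funext fun i => by simp [dyadicCorner, Nat.lt_one_iff.1 (hk i)]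
  rw [subcellAvg, hl, pow_zero, div_one]

end Dyadic

section CalderonZygmund

variable {g : (Fin n → ℝ) → ℝ} {l : Fin n → ℝ} {s t : ℝ}

/-- The Calderón–Zygmund cubes: `q = (m, k)` (level, index) is selected when the average of `g`
on the subcell exceeds `t` but on no strict ancestor, `cell l s` (level `0`) included. -/
def IsStoppingCell (g : (Fin n → ℝ) → ℝ) (l : Fin n → ℝ) (s t : ℝ) (q : ℕ × (Fin n → ℕ)) :
    Prop :=
  (∀ i, q.2 i < 2 ^ q.1) ∧ t < subcellAvg g l s q.1 q.2 ∧
    ∀ j < q.1, subcellAvg g l s j (fun i => q.2 i / 2 ^ (q.1 - j)) ≤ t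

def stoppingSet (g : (Fin n → ℝ) → ℝ) (l : Fin n → ℝ) (s t : ℝ) : Set (Fin n → ℝ) :=
  ⋃ q : {q // IsStoppingCell g l s t q}, subcell l s q.1.1 q.1.2

lemma IsStoppingCell.eq_of_mem (hs : 0 < s) {q q' : ℕ × (Fin n → ℕ)}
    (hq : IsStoppingCell g l s t q) (hq' : IsStoppingCell g l s t q') (hle : q.1 ≤ q'.1)
    {x : Fin n → ℝ} (hx : x ∈ subcell l s q.1 q.2) (hx' : x ∈ subcell l s q'.1 q'.2) : q = q' := by
  obtain ⟨d, hd⟩ := Nat.exists_eq_add_of_le hle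
  rw [mem_subcell_iff hs] at hx hx'
  have hk : q.2 = fun i => q'.2 i / 2 ^ d := by
    rw [← hx.2, ← hx'.2, hd, dyadicIndex_div_two_pow hs]
  rcases d.eq_zero_or_pos with rfl | hd0
  · simp only [pow_zero, Nat.div_one] at hk
    exact Prod.ext hd.symm hk
  · have := hq'.2.2 q.1 (by omega)
    rw [show q'.1 - q.1 = d by omega, ← hk] at this
    exact absurd hq.2.1 this.not_gt

lemma pairwise_disjoint_stoppingCells (hs : 0 < s) :
    Pairwise (Disjoint on fun q : {q // IsStoppingCell g l s t q} => subcell l s q.1.1 q.1.2) := by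
  intro q q' hne
  refine Set.disjoint_left.2 fun x hx hx' => hne ?_
  rcases le_total q.1.1 q'.1.1 with h | h
  · exact Subtype.ext (q.2.eq_of_mem hs q'.2 h hx hx')
  · exact (Subtype.ext (q'.2.eq_of_mem hs q.2 h hx' hx)).symm

lemma volume_stoppingSet (hs : 0 < s) :
    volume (stoppingSet g l s t) =
      ∑' q : {q // IsStoppingCell g l s t q}, volume (subcell l s q.1.1 q.1.2) :=
  measure_iUnion (pairwise_disjoint_stoppingCells hs) fun _ => measurableSet_cell

lemma stoppingSet_subset_cell (hs : 0 < s) : stoppingSet g l s t ⊆ cell l s :=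
  iUnion_subset fun q => subcell_subset_cell hs q.2.1

lemma ofReal_mul_volume_cell_le (hs : 0 < s) (ht : t ≤ cellAvg g l s)
    (hg0 : 0 ≤ g) (hg : IntegrableOn g (cell l s) volume) :
    ENNReal.ofReal t * volume (cell l s) ≤ ∫⁻ x in cell l s, ENNReal.ofReal (g x) := by
  rw [volume_cell hs.le, ← ENNReal.ofReal_mul' (by positivity),
    ← ofReal_integral_eq_lintegral_ofReal hg (.of_forall hg0)]
  refine ENNReal.ofReal_le_ofReal ?_
  rwa [cellAvg, le_inv_mul_iff₀ (by positivity), mul_comm] at ht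

lemma ofReal_mul_volume_stoppingSet_le (hs : 0 < s) (hg0 : 0 ≤ g)
    (hg : LocallyIntegrable g volume) :
    ENNReal.ofReal t * volume (stoppingSet g l s t) ≤ ∫⁻ x in cell l s, ENNReal.ofReal (g x) :=
  calc ENNReal.ofReal t * volume (stoppingSet g l s t)
      = ∑' q : {q // IsStoppingCell g l s t q},
          ENNReal.ofReal t * volume (subcell l s q.1.1 q.1.2) := by
        rw [volume_stoppingSet hs, ENNReal.tsum_mul_left]
    _ ≤ ∑' q : {q // IsStoppingCell g l s t q},
          ∫⁻ x in subcell l s q.1.1 q.1.2, ENNReal.ofReal (g x) :=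
        ENNReal.tsum_le_tsum fun q =>
          ofReal_mul_volume_cell_le (by positivity) q.2.2.1.le hg0 hg.integrableOn_cell
    _ = ∫⁻ x in stoppingSet g l s t, ENNReal.ofReal (g x) :=
        (lintegral_iUnion (fun _ => measurableSet_cell) (pairwise_disjoint_stoppingCells hs) _).symm
    _ ≤ ∫⁻ x in cell l s, ENNReal.ofReal (g x) := lintegral_mono_set (stoppingSet_subset_cell hs)

lemma IsStoppingCell.subcellAvg_le (hs : 0 < s) (hg0 : 0 ≤ g) (hg : LocallyIntegrable g volume)
    (hQ : cellAvg g l s ≤ t) {q : ℕ × (Fin n → ℕ)} (hq : IsStoppingCell g l s t q) :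
    subcellAvg g l s q.1 q.2 ≤ 2 ^ n * t := by
  obtain ⟨m | m, k⟩ := q
  · exact absurd hQ (subcellAvg_zero g hq.1 ▸ hq.2.1).not_ge
  · have hparent := hq.2.2 m m.lt_succ_self
    simp only [Nat.add_sub_cancel_left, pow_one] at hparent
    have hsub : cell (dyadicCorner l s (m + 1) k) (s / 2 ^ m / 2) ⊆
        cell (dyadicCorner l s m fun i => k i / 2) (s / 2 ^ m) := by
      simpa only [subcell, pow_succ, ← div_div, pow_zero, one_mul] using
        subcell_subset_subcell hs m 1 k
    calc subcellAvg g l s (m + 1) k ≤ 2 ^ n * subcellAvg g l s m fun i => k i / 2 := by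
          simpa only [subcellAvg, pow_succ, ← div_div] using
            cellAvg_le_two_pow_mul (by positivity) hsub hg0 hg.integrableOn_cell
      _ ≤ 2 ^ n * t := by gcongr

lemma ae_le_of_notMem_stoppingSet (hs : 0 < s) (hg : LocallyIntegrable g volume) :
    ∀ᵐ x, x ∈ cell l s → x ∉ stoppingSet g l s t → g x ≤ t := by
  filter_upwards [ae_tendsto_cellAvg hg] with x hx hxQ hxU
  have hgood : ∀ m, subcellAvg g l s m (dyadicIndex l s m x) ≤ t := by
    classical
    by_contra! hbad
    have hstop : IsStoppingCell g l s t (Nat.find hbad, dyadicIndex l s (Nat.find hbad) x) := by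
      refine ⟨dyadicIndex_lt hs hxQ, Nat.find_spec hbad, fun j hj => ?_⟩
      have hanc := dyadicIndex_div_two_pow (l := l) hs j (Nat.find hbad - j) x
      rw [Nat.add_sub_cancel' hj.le] at hanc
      rw [hanc]
      exact not_lt.1 (Nat.find_min hbad hj)
    exact hxU (mem_iUnion.2 ⟨⟨_, hstop⟩, mem_subcell_dyadicIndex hs hxQ⟩)
  have hσ : Tendsto (fun m : ℕ => s / 2 ^ m) atTop (𝓝 0) :=
    tendsto_const_nhds.div_atTop (tendsto_pow_atTop_atTop_of_one_lt one_lt_two)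
  exact le_of_tendsto' (hx _ _ (fun m => by positivity) hσ
    fun m => mem_subcell_dyadicIndex hs hxQ) hgood

end CalderonZygmund

section LayerCake

def layerCakeConst (p : ℝ) : ℝ := ∑' k : ℕ, ((k : ℝ) + 1) ^ p / 2 ^ k

lemma summable_succ_rpow_div_two_pow (p : ℝ) : Summable fun k : ℕ => ((k : ℝ) + 1) ^ p / 2 ^ k := by
  have hc : Summable fun k : ℕ => ((k + 1 : ℕ) : ℝ) ^ ⌈p⌉₊ * (2⁻¹ : ℝ) ^ (k + 1) :=
    (summable_nat_add_iff (f := fun k : ℕ => (k : ℝ) ^ ⌈p⌉₊ * (2⁻¹ : ℝ) ^ k) 1).2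
      (summable_pow_mul_geometric_of_norm_lt_one _ (by norm_num))
  refine Summable.of_nonneg_of_le (fun k => by positivity) (fun k => ?_) (hc.mul_left 2)
  calc ((k : ℝ) + 1) ^ p / 2 ^ k ≤ ((k : ℝ) + 1) ^ (⌈p⌉₊ : ℝ) / 2 ^ k := by
        gcongr
        · linarith [k.cast_nonneg (α := ℝ)]
        · exact Nat.le_ceil p
    _ = 2 * (((k + 1 : ℕ) : ℝ) ^ ⌈p⌉₊ * (2⁻¹ : ℝ) ^ (k + 1)) := by
        rw [Real.rpow_natCast, div_eq_mul_inv, ← inv_pow]; push_cast; ring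

lemma layerCakeConst_pos (p : ℝ) : 0 < layerCakeConst p :=
  (summable_succ_rpow_div_two_pow p).tsum_pos (fun _ => by positivity) 0 (by norm_num)

variable {α : Type*} [MeasurableSpace α] {μ : Measure α} {G : α → ℝ} {a p : ℝ}

lemma ofReal_rpow_le_tsum (ha : 0 < a) (hp : 0 < p) {y : ℝ} (hy : 0 ≤ y) :
    ENNReal.ofReal (y ^ p) ≤
      ∑' k : ℕ, if a * k < y then ENNReal.ofReal ((a * (k + 1)) ^ p) else 0 := by
  rcases hy.eq_or_lt with rfl | hy
  · simp [Real.zero_rpow hp.ne']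
  have hceil : 0 < ⌈y / a⌉₊ := Nat.ceil_pos.2 (div_pos hy ha)
  set k₀ := ⌈y / a⌉₊ - 1
  have hlow : a * k₀ < y := by
    have := Nat.lt_ceil.1 (Nat.sub_one_lt hceil.ne')
    rwa [lt_div_iff₀ ha, mul_comm] at this
  have hup : y ≤ a * (k₀ + 1) := by
    have : (k₀ : ℝ) + 1 = ⌈y / a⌉₊ := by norm_cast; omega
    rw [this, ← div_le_iff₀' ha]
    exact Nat.le_ceil _
  calc ENNReal.ofReal (y ^ p) ≤ ENNReal.ofReal ((a * (k₀ + 1)) ^ p) := by gcongr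
    _ = if a * k₀ < y then ENNReal.ofReal ((a * (k₀ + 1)) ^ p) else 0 := (if_pos hlow).symm
    _ ≤ _ := ENNReal.le_tsum k₀

theorem lintegral_ofReal_rpow_le (hG : AEMeasurable G μ) (hG0 : 0 ≤ G) (ha : 0 < a) (hp : 0 < p)
    (htail : ∀ k : ℕ, μ {x | a * k < G x} ≤ 2⁻¹ ^ k * μ univ) :
    ∫⁻ x, ENNReal.ofReal (G x ^ p) ∂μ ≤ ENNReal.ofReal (a ^ p * layerCakeConst p) * μ univ := by
  have hE : ∀ k : ℕ, NullMeasurableSet {x | a * k < G x} μ := fun k =>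
    nullMeasurableSet_lt aemeasurable_const hG
  have hterm : ∀ k : ℕ, ENNReal.ofReal ((a * (k + 1)) ^ p) * 2⁻¹ ^ k =
      ENNReal.ofReal (a ^ p * (((k : ℝ) + 1) ^ p / 2 ^ k)) := by
    intro k
    rw [← ENNReal.ofReal_ofNat 2, ← ENNReal.ofReal_inv_of_pos two_pos,
      ← ENNReal.ofReal_pow (by norm_num), ← ENNReal.ofReal_mul (by positivity),
      Real.mul_rpow ha.le (by positivity), div_eq_mul_inv, ← inv_pow]
    congr 1; ring
  calc ∫⁻ x, ENNReal.ofReal (G x ^ p) ∂μ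
      ≤ ∫⁻ x, ∑' k : ℕ, {x | a * k < G x}.indicator
          (fun _ => ENNReal.ofReal ((a * (k + 1)) ^ p)) x ∂μ := by
        refine lintegral_mono fun x => (ofReal_rpow_le_tsum ha hp (hG0 x)).trans_eq ?_
        simp only [indicator_apply, mem_ofPred_eq]
    _ = ∑' k : ℕ, ENNReal.ofReal ((a * (k + 1)) ^ p) * μ {x | a * k < G x} := by
        rw [lintegral_tsum fun k => aemeasurable_const.indicator₀ (hE k)]
        exact tsum_congr fun k => lintegral_indicator_const₀ (hE k) _
    _ ≤ ∑' k : ℕ, ENNReal.ofReal ((a * (k + 1)) ^ p) * 2⁻¹ ^ k * μ univ :=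
        ENNReal.tsum_le_tsum fun k => by rw [mul_assoc]; gcongr; exact htail k
    _ = ENNReal.ofReal (a ^ p * layerCakeConst p) * μ univ := by
        simp only [hterm, ENNReal.tsum_mul_right, layerCakeConst]
        rw [← ENNReal.ofReal_tsum_of_nonneg (fun k => by positivity)
          ((summable_succ_rpow_div_two_pow p).mul_left _), tsum_mul_left]

lemma integrable_and_integral_le_of_lintegral_le {F : α → ℝ} (hF : AEStronglyMeasurable F μ)
    (hF0 : 0 ≤ F) {M : ℝ} (hM : 0 ≤ M) (h : ∫⁻ x, ENNReal.ofReal (F x) ∂μ ≤ ENNReal.ofReal M) :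
    Integrable F μ ∧ ∫ x, F x ∂μ ≤ M := by
  refine ⟨⟨hF, (hasFiniteIntegral_iff_ofReal (.of_forall hF0)).2
    (h.trans_lt ENNReal.ofReal_lt_top)⟩, ?_⟩
  rw [integral_eq_lintegral_of_nonneg_ae (.of_forall hF0) hF]
  exact ENNReal.toReal_le_of_le_ofReal hM h

end LayerCake

section JohnNirenberg

variable {f : (Fin n → ℝ) → ℝ} {B : ℝ}

def HasMeanOscBound (f : (Fin n → ℝ) → ℝ) (B : ℝ) : Prop :=
  ∀ l s, 0 < s → cellAvg (fun x => |f x - cellAvg f l s|) l s ≤ B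

variable {l : Fin n → ℝ} {s : ℝ}

lemma MeasureTheory.LocallyIntegrable.abs_sub_const (hf : LocallyIntegrable f volume) (a : ℝ) :
    LocallyIntegrable (fun x => |f x - a|) volume :=
  have h := hf.sub (locallyIntegrable_const a)
  h.mono h.aestronglyMeasurable.norm (.of_forall fun _ => by simp [Real.norm_eq_abs])

lemma abs_subcellAvg_sub_cellAvg_le (hf : LocallyIntegrable f volume) (hB0 : 0 < B)
    (hB : HasMeanOscBound f B) (hs : 0 < s) {q : ℕ × (Fin n → ℕ)}
    (hq : IsStoppingCell (fun x => |f x - cellAvg f l s|) l s (2 * B) q) :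
    |subcellAvg f l s q.1 q.2 - cellAvg f l s| ≤ 2 ^ (n + 1) * B :=
  calc |subcellAvg f l s q.1 q.2 - cellAvg f l s|
      ≤ subcellAvg (fun x => |f x - cellAvg f l s|) l s q.1 q.2 :=
        abs_cellAvg_sub_le (by positivity) hf.integrableOn_cell _
    _ ≤ 2 ^ n * (2 * B) := by
        refine hq.subcellAvg_le hs (fun x => abs_nonneg _) (hf.abs_sub_const _) ?_
        linarith [hB l s hs]
    _ = 2 ^ (n + 1) * B := by ring

lemma volume_stoppingSet_le_half (hf : LocallyIntegrable f volume) (hB0 : 0 < B)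
    (hB : HasMeanOscBound f B) (hs : 0 < s) :
    volume (stoppingSet (fun x => |f x - cellAvg f l s|) l s (2 * B)) ≤
      2⁻¹ * volume (cell l s) := by
  have hg := hf.abs_sub_const (cellAvg f l s)
  have hosc : ∫⁻ x in cell l s, ENNReal.ofReal |f x - cellAvg f l s| ≤
      ENNReal.ofReal B * volume (cell l s) := by
    rw [volume_cell hs.le, ← ENNReal.ofReal_mul hB0.le,
      ← ofReal_integral_eq_lintegral_ofReal hg.integrableOn_cell (.of_forall fun _ => abs_nonneg _)]
    refine ENNReal.ofReal_le_ofReal ?_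
    have := hB l s hs
    rwa [cellAvg, inv_mul_le_iff₀ (by positivity), mul_comm] at this
  have hhalf : ENNReal.ofReal B * volume (cell l s) =
      ENNReal.ofReal (2 * B) * (2⁻¹ * volume (cell l s)) := by
    rw [ENNReal.ofReal_mul zero_le_two, ENNReal.ofReal_ofNat, mul_mul_mul_comm,
      ENNReal.mul_inv_cancel two_ne_zero ENNReal.ofNat_ne_top, one_mul]
  have h2B : ENNReal.ofReal (2 * B) ≠ 0 := (ENNReal.ofReal_pos.2 (by positivity)).ne'
  exact (ENNReal.mul_le_mul_iff_right h2B ENNReal.ofReal_ne_top).1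
    ((ofReal_mul_volume_stoppingSet_le hs (fun x => abs_nonneg _) hg).trans (hosc.trans_eq hhalf))

theorem volume_lt_abs_sub_cellAvg_le (hf : LocallyIntegrable f volume) (hB0 : 0 < B)
    (hB : HasMeanOscBound f B) (k : ℕ) (hs : 0 < s) :
    volume ({x | 2 ^ (n + 1) * B * k < |f x - cellAvg f l s|} ∩ cell l s) ≤
      2⁻¹ ^ k * volume (cell l s) := by
  induction k generalizing l s with
  | zero => simpa using measure_mono inter_subset_right
  | succ k ih =>
    set g := fun x => |f x - cellAvg f l s|
    set T := {x | 2 ^ (n + 1) * B * ((k + 1 : ℕ) : ℝ) < g x} ∩ cell l s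
    set D := fun q : {q // IsStoppingCell g l s (2 * B) q} => subcell l s q.1.1 q.1.2
    have hout : volume (T \ stoppingSet g l s (2 * B)) = 0 := by
      refine measure_mono_null ?_ (ae_iff.1 (ae_le_of_notMem_stoppingSet (l := l) (t := 2 * B) hs
        (hf.abs_sub_const (cellAvg f l s))))
      rintro x ⟨⟨hxT, hxQ⟩, hxU⟩ hle
      have h2B : 2 * B ≤ 2 ^ (n + 1) * B * ((k + 1 : ℕ) : ℝ) := by
        calc 2 * B ≤ 2 ^ (n + 1) * B := by
              gcongr; exact le_self_pow₀ one_le_two n.succ_ne_zero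
          _ ≤ 2 ^ (n + 1) * B * ((k + 1 : ℕ) : ℝ) :=
              le_mul_of_one_le_right (by positivity) (by norm_cast; omega)
      exact absurd (hle hxQ hxU) (not_le.2 (h2B.trans_lt hxT))
    have hin : ∀ q, volume (T ∩ D q) ≤ 2⁻¹ ^ k * volume (D q) := by
      intro q
      refine (measure_mono ?_).trans
        (ih (l := dyadicCorner l s q.1.1 q.1.2) (s := s / 2 ^ q.1.1) (by positivity))
      rintro x ⟨⟨hxT, -⟩, hxD⟩
      refine ⟨?_, hxD⟩
      have hD := abs_subcellAvg_sub_cellAvg_le hf hB0 hB hs q.2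
      have htri := abs_sub_le (f x) (subcellAvg f l s q.1.1 q.1.2) (cellAvg f l s)
      simp only [mem_ofPred_eq, g] at hxT ⊢
      push_cast at hxT ⊢
      rw [subcellAvg] at hD htri
      linarith
    calc volume T ≤ volume (T ∩ stoppingSet g l s (2 * B)) + 0 :=
          hout ▸ measure_le_inter_add_sdiff _ _ _
      _ = volume (⋃ q, T ∩ D q) := by rw [add_zero, stoppingSet, inter_iUnion]
      _ ≤ ∑' q, 2⁻¹ ^ k * volume (D q) :=
          (measure_iUnion_le _).trans (ENNReal.tsum_le_tsum hin)
      _ = 2⁻¹ ^ k * volume (stoppingSet g l s (2 * B)) := by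
          rw [ENNReal.tsum_mul_left, volume_stoppingSet hs]
      _ ≤ 2⁻¹ ^ k * (2⁻¹ * volume (cell l s)) := by
          gcongr; exact volume_stoppingSet_le_half hf hB0 hB hs
      _ = 2⁻¹ ^ (k + 1) * volume (cell l s) := by rw [pow_succ, mul_assoc]

theorem integrableOn_and_cellAvg_rpow_abs_sub_le {p : ℝ} (hf : LocallyIntegrable f volume)
    (hB0 : 0 < B) (hB : HasMeanOscBound f B) (hp : 0 < p) (hs : 0 < s) :
    IntegrableOn (fun x => |f x - cellAvg f l s| ^ p) (cell l s) volume ∧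
      cellAvg (fun x => |f x - cellAvg f l s| ^ p) l s ^ (1 / p) ≤
        2 ^ (n + 1) * layerCakeConst p ^ (1 / p) * B := by
  have ha : 0 < 2 ^ (n + 1) * B := by positivity
  have hG : AEMeasurable (fun x => |f x - cellAvg f l s|) (volume.restrict (cell l s)) :=
    (hf.abs_sub_const _).integrableOn_cell.aemeasurable
  have hlin := lintegral_ofReal_rpow_le hG (fun x => abs_nonneg _) ha hp
    fun k => by
      rw [Measure.restrict_apply' measurableSet_cell, Measure.restrict_apply_univ]
      exact volume_lt_abs_sub_cellAvg_le hf hB0 hB k hs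
  have hM : 0 ≤ (2 ^ (n + 1) * B) ^ p * layerCakeConst p := by
    have := layerCakeConst_pos p; positivity
  rw [Measure.restrict_apply_univ, volume_cell hs.le, ← ENNReal.ofReal_mul hM] at hlin
  obtain ⟨hint, hle⟩ := integrable_and_integral_le_of_lintegral_le
    (hG.pow_const p).aestronglyMeasurable (fun x => by positivity) (by positivity) hlin
  refine ⟨hint, ?_⟩
  have havg : cellAvg (fun x => |f x - cellAvg f l s| ^ p) l s ≤
      (2 ^ (n + 1) * B) ^ p * layerCakeConst p := by
    rw [cellAvg, inv_mul_le_iff₀ (by positivity), mul_comm]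
    exact hle
  calc cellAvg (fun x => |f x - cellAvg f l s| ^ p) l s ^ (1 / p)
      ≤ ((2 ^ (n + 1) * B) ^ p * layerCakeConst p) ^ (1 / p) := by
        gcongr
        exact mul_nonneg (inv_nonneg.2 (by positivity)) (integral_nonneg fun x => by positivity)
    _ = 2 ^ (n + 1) * layerCakeConst p ^ (1 / p) * B := by
        rw [Real.mul_rpow (by positivity) (layerCakeConst_pos p).le,
          ← Real.rpow_mul (by positivity), mul_one_div_cancel hp.ne', Real.rpow_one]
        ring

end JohnNirenberg

section Euclidean

variable {f : Ev n → ℝ}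

lemma cube_eq_preimage_ofLp (c : Ev n) (h : ℝ) :
    cube c h = WithLp.ofLp ⁻¹' pi univ fun i => Icc (c i - h / 2) (c i - h / 2 + h) := by
  ext x
  simp only [cube, mem_ofPred_eq, mem_preimage, mem_univ_pi, mem_Icc, abs_le]
  refine forall_congr' fun i => ?_
  constructor <;> rintro ⟨h₁, h₂⟩ <;> constructor <;> linarith

lemma setIntegral_cube (F : Ev n → ℝ) (c : Ev n) (h : ℝ) :
    ∫ x in cube c h, F x = ∫ y in cell (fun i => c i - h / 2) h, F (WithLp.toLp 2 y) := by
  rw [cube_eq_preimage_ofLp, setIntegral_congr_set cell_ae_eq_pi_Icc]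
  exact (PiLp.volume_preserving_ofLp _).setIntegral_preimage_emb
    (MeasurableEquiv.toLp 2 _).symm.measurableEmbedding (fun y => F (WithLp.toLp 2 y)) _

lemma integrableOn_cube_iff (F : Ev n → ℝ) (c : Ev n) (h : ℝ) :
    IntegrableOn F (cube c h) volume ↔
      IntegrableOn (fun y => F (WithLp.toLp 2 y)) (cell (fun i => c i - h / 2) h) volume := by
  rw [cube_eq_preimage_ofLp, integrableOn_congr_set_ae (cell_ae_eq_pi_Icc (s := h))]
  exact (PiLp.volume_preserving_ofLp (Fin n)).integrableOn_comp_preimage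
    (MeasurableEquiv.toLp 2 _).symm.measurableEmbedding (f := fun y => F (WithLp.toLp 2 y))

lemma cubeAvg_eq_cellAvg (c : Ev n) (h : ℝ) :
    cubeAvg f c h = cellAvg (fun y => f (WithLp.toLp 2 y)) (fun i => c i - h / 2) h := by
  rw [cubeAvg, cellAvg, setIntegral_cube, smul_eq_mul]

lemma MeasureTheory.LocallyIntegrable.comp_toLp (hf : LocallyIntegrable f volume) :
    LocallyIntegrable (fun y => f (WithLp.toLp 2 y)) volume := by
  rw [← (PiLp.volume_preserving_toLp (Fin n)).map_eq] at hf
  exact (locallyIntegrable_map_homeomorph (PiLp.homeomorph 2 _).symm).1 hf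

lemma hasMeanOscBound_comp_toLp (hf : bmoENorm f ≠ ⊤) :
    HasMeanOscBound (fun y => f (WithLp.toLp 2 y)) (bmoENorm f).toReal := by
  intro l s hs
  set c : Ev n := WithLp.toLp 2 fun i => l i + s / 2
  have hl : (fun i => c i - s / 2) = l := funext fun i => add_sub_cancel_right _ _
  have hosc : ENNReal.ofReal ((s ^ n)⁻¹ * ∫ x in cube c s, |f x - cubeAvg f c s|) ≤ bmoENorm f :=
    le_iSup₂_of_le c s (le_iSup_of_le hs le_rfl)
  rwa [ENNReal.ofReal_le_iff_le_toReal hf, cubeAvg_eq_cellAvg, setIntegral_cube, hl] at hosc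

end Euclidean

theorem john_nirenberg_lp_general (n : ℕ) (p : ℝ) (hp : 1 < p) :
    ∃ C : ℝ, 0 < C ∧ ∀ f : Ev n → ℝ,
      MeasureTheory.LocallyIntegrable f volume → bmoENorm f < ⊤ →
      ∀ (c : Ev n) (h : ℝ), 0 < h →
        IntegrableOn (fun x => |f x - cubeAvg f c h| ^ p) (cube c h) volume ∧
        ((h ^ n)⁻¹ * ∫ x in cube c h, |f x - cubeAvg f c h| ^ p) ^ (1 / p) ≤
          C * (bmoENorm f).toReal := by
  have hp0 : 0 < p := zero_lt_one.trans hp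
  set C := 2 ^ (n + 1) * layerCakeConst p ^ (1 / p)
  have hC : 0 < C := mul_pos (by positivity) (Real.rpow_pos_of_pos (layerCakeConst_pos p) _)
  refine ⟨C, hC, fun f hf hfin c h hh => ?_⟩
  set g : (Fin n → ℝ) → ℝ := fun y => f (WithLp.toLp 2 y)
  set l : Fin n → ℝ := fun i => c i - h / 2
  have hosc := hasMeanOscBound_comp_toLp hfin.ne
  have key : ∀ ε : ℝ, 0 < ε →
      IntegrableOn (fun y => |g y - cellAvg g l h| ^ p) (cell l h) volume ∧
        cellAvg (fun y => |g y - cellAvg g l h| ^ p) l h ^ (1 / p) ≤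
          C * ((bmoENorm f).toReal + ε) := fun ε hε =>
    integrableOn_and_cellAvg_rpow_abs_sub_le hf.comp_toLp (by positivity)
      (fun l s hs => (hosc l s hs).trans (le_add_of_nonneg_right hε.le)) hp0 hh
  rw [integrableOn_cube_iff, setIntegral_cube, cubeAvg_eq_cellAvg]
  refine ⟨(key 1 one_pos).1, le_of_forall_pos_le_add fun ε hε => ?_⟩
  calc _ ≤ C * ((bmoENorm f).toReal + ε / C) := (key _ (div_pos hε hC)).2
    _ = C * (bmoENorm f).toReal + ε := by field_simp

/-- **John–Nirenberg `L^p` estimate.**  For every dimension `n ≥ 1` and every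
`p ∈ (1,∞)` there is a constant `C = C(n,p)` such that for every
`f ∈ L¹_loc ∩ BMO(ℝⁿ)` and every cube `Q`, the function `|f - f_Q|^p` is
integrable on `Q` and `((1/|Q|) ∫_Q |f - f_Q|^p)^{1/p} ≤ C ‖f‖_BMO`.  In
particular every BMO function is locally `p`-integrable for all `1 < p < ∞`. -/
theorem john_nirenberg_lp (n : ℕ) (hn : 1 ≤ n) (p : ℝ) (hp : 1 < p) :
    ∃ C : ℝ, 0 < C ∧ ∀ f : Ev n → ℝ,
      MeasureTheory.LocallyIntegrable f volume → bmoENorm f < ⊤ →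
      ∀ (c : Ev n) (h : ℝ), 0 < h →
        IntegrableOn (fun x => |f x - cubeAvg f c h| ^ p) (cube c h) volume ∧
        ((h ^ n)⁻¹ * ∫ x in cube c h, |f x - cubeAvg f c h| ^ p) ^ (1 / p) ≤
          C * (bmoENorm f).toReal :=
  john_nirenberg_lp_general n p hp

end
end
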